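/- arXiv:2203.10787 — 2 statements merged into one kernel-verified Lean document; each statement's English description precedes it below -/
import Mathlib

section
/- In the N-particle elastic feedback system, the elastic stopping times coincide pathwise with absorbing hitting times for the shifted initial conditions: surely, for every i = 1, …, N, τ_{i,N} = inf{t ≥ 0 : X^i_{0-} + ξ^i + B^i_t − αΛ^N_t ≤ 0}. Consequently, (Λ^N) solves the elastic particle system if and only if it solves the absorbing particle system with initial conditions X^i_{0-} + ξ^i. -/
open MeasureTheory ProbabilityTheory Filter Topology Set

noncomputable section

/-- Running minimum of a path over the time interval `[0, t]`. -/
def runMin (Y : ℝ → ℝ) (t : ℝ) : ℝ := sInf (Y '' Set.Icc 0 t)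

/-- The reflection term `L_t = max(0, - inf_{0 ≤ s ≤ t} Y_s)` of the Skorokhod problem. -/
def reflTerm (Y : ℝ → ℝ) (t : ℝ) : ℝ := max 0 (-(runMin Y t))

/-- First time `t ≥ 0` at which `L_t ≥ x`, valued in `EReal` with `inf ∅ = ⊤`. -/
def hitTime (L : ℝ → ℝ) (x : ℝ) : EReal :=
  sInf ((fun t : ℝ => (t : EReal)) '' {t : ℝ | 0 ≤ t ∧ x ≤ L t})

/-- First time `t ≥ 0` at which `Y_t ≤ 0`, valued in `EReal` with `inf ∅ = ⊤`. -/
def hitZeroTime (Y : ℝ → ℝ) : EReal :=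
  sInf ((fun t : ℝ => (t : EReal)) '' {t : ℝ | 0 ≤ t ∧ Y t ≤ 0})

/-- An increasing càdlàg function `Λ : [0,∞) → [0,1]` with `Λ_{0-} = 0`, encoded as a
function on `ℝ` vanishing on negatives. -/
def IsLossFn (Λ : ℝ → ℝ) : Prop :=
  Monotone Λ ∧ (∀ t : ℝ, ContinuousWithinAt Λ (Set.Ici t) t) ∧
    (∀ t : ℝ, t < 0 → Λ t = 0) ∧ ∀ t : ℝ, Λ t ≤ 1

/-- A standard Brownian motion: starts at `0`, continuous paths, Gaussian increments
`N(0, t-s)`, and independent increments. -/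
def IsStandardBM {Ω : Type*} [MeasurableSpace Ω] (P : Measure Ω) (B : ℝ → Ω → ℝ) : Prop :=
  (∀ ω, B 0 ω = 0) ∧ (∀ ω, Continuous fun t => B t ω) ∧ (∀ t, Measurable (B t)) ∧
    (∀ s t : ℝ, 0 ≤ s → s ≤ t →
      Measure.map (fun ω => B t ω - B s ω) P = gaussianReal 0 (Real.toNNReal (t - s))) ∧
    ∀ (n : ℕ) (t : ℕ → ℝ), Monotone t → 0 ≤ t 0 →
      iIndepFun (fun (i : Fin n) ω => B (t (i + 1)) ω - B (t i) ω) P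

/-- The elastic stopping time `τ = inf{t ≥ 0 : L_t ≥ ξ}` for the path `Y_s = X_{0-} + B_s − αΛ_s`. -/
def elasticTau {Ω : Type*} (B : ℝ → Ω → ℝ) (X0 ξ : Ω → ℝ) (α : ℝ) (Λ : ℝ → ℝ) (ω : Ω) : EReal :=
  hitTime (reflTerm (fun s => X0 ω + B s ω - α * Λ s)) (ξ ω)

/-- `Λ` solves the elastic feedback problem: `Λ` is a loss function and `Λ_t = P(τ ≤ t)` for `t ≥ 0`. -/
def IsElasticSol {Ω : Type*} [MeasurableSpace Ω] (P : Measure Ω) (B : ℝ → Ω → ℝ)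
    (X0 ξ : Ω → ℝ) (α : ℝ) (Λ : ℝ → ℝ) : Prop :=
  IsLossFn Λ ∧ ∀ t : ℝ, 0 ≤ t → Λ t = (P {ω | elasticTau B X0 ξ α Λ ω ≤ (t : EReal)}).toReal

/-- The absorbing stopping time `τᵃ = inf{t ≥ 0 : Z_{0-} + B_t − αΛ_t ≤ 0}`. -/
def absorbTau {Ω : Type*} (B : ℝ → Ω → ℝ) (Z0 : Ω → ℝ) (α : ℝ) (Λ : ℝ → ℝ) (ω : Ω) : EReal :=
  hitZeroTime (fun s => Z0 ω + B s ω - α * Λ s)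

/-- `Λ` solves the absorbing feedback problem with initial condition `Z0`. -/
def IsAbsorbingSol {Ω : Type*} [MeasurableSpace Ω] (P : Measure Ω) (B : ℝ → Ω → ℝ)
    (Z0 : Ω → ℝ) (α : ℝ) (Λ : ℝ → ℝ) : Prop :=
  IsLossFn Λ ∧ ∀ t : ℝ, 0 ≤ t → Λ t = (P {ω | absorbTau B Z0 α Λ ω ≤ (t : EReal)}).toReal

/-- Physical solution of the elastic feedback problem: the jump condition
`ΔΛ_t = inf{x ≥ 0 : P(t < τ, 0 < X_{0-} + ξ + B_t − αΛ_{t−} < αx) < x}`. -/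
def IsPhysicalElasticSol {Ω : Type*} [MeasurableSpace Ω] (P : Measure Ω) (B : ℝ → Ω → ℝ)
    (X0 ξ : Ω → ℝ) (α : ℝ) (Λ : ℝ → ℝ) : Prop :=
  IsElasticSol P B X0 ξ α Λ ∧ ∀ t : ℝ, 0 ≤ t →
    Λ t - Function.leftLim Λ t =
      sInf {x : ℝ | 0 ≤ x ∧
        (P {ω | (t : EReal) < elasticTau B X0 ξ α Λ ω ∧
          0 < X0 ω + ξ ω + B t ω - α * Function.leftLim Λ t ∧
          X0 ω + ξ ω + B t ω - α * Function.leftLim Λ t < α * x}).toReal < x}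

/-- `Λ` is the minimal solution of the elastic feedback problem. -/
def IsMinimalElasticSol {Ω : Type*} [MeasurableSpace Ω] (P : Measure Ω) (B : ℝ → Ω → ℝ)
    (X0 ξ : Ω → ℝ) (α : ℝ) (Λ : ℝ → ℝ) : Prop :=
  IsElasticSol P B X0 ξ α Λ ∧
    ∀ Λ' : ℝ → ℝ, IsElasticSol P B X0 ξ α Λ' → ∀ t : ℝ, 0 ≤ t → Λ t ≤ Λ' t

/-- `ξ` is exponentially distributed with rate `κ`: `P(ξ > x) = e^{-κx}` for `x ≥ 0`. -/
def IsExponential {Ω : Type*} [MeasurableSpace Ω] (P : Measure Ω) (κ : ℝ) (ξ : Ω → ℝ) : Prop :=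
  Measurable ξ ∧ ∀ x : ℝ, 0 ≤ x → P {ω | x < ξ ω} = ENNReal.ofReal (Real.exp (-κ * x))

/-- `X0` has a bounded density `f` which changes monotonicity at most finitely often
on every compact interval. -/
def HasNiceDensity {Ω : Type*} [MeasurableSpace Ω] (P : Measure Ω) (X0 : Ω → ℝ) (f : ℝ → ℝ) : Prop :=
  (∀ x, 0 ≤ f x) ∧ (∃ C : ℝ, ∀ x, f x ≤ C) ∧ Measurable f ∧
    Measure.map X0 P = MeasureTheory.volume.withDensity (fun x => ENNReal.ofReal (f x)) ∧
    ∀ a b : ℝ, a ≤ b → ∃ (n : ℕ) (t : Fin (n + 1) → ℝ), Monotone t ∧ t 0 = a ∧ t (Fin.last n) = b ∧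
      ∀ i : Fin n, MonotoneOn f (Set.Icc (t i.castSucc) (t i.succ)) ∨
        AntitoneOn f (Set.Icc (t i.castSucc) (t i.succ))


/-- The Skorokhod reflection map at `0`: `Θ(Y)_t = Y_t + max(0, −inf_{0≤s≤t} Y_s)`. -/
def skorokhod (Y : ℝ → ℝ) (t : ℝ) : ℝ := Y t + reflTerm Y t

/-!
Because `Λ` is increasing and right-continuous, it is upper semicontinuous, so the path
`Y = X_{0-} + B − αΛ` is lower semicontinuous and attains its minimum on every `[0, t]`.
Hence the reflection term `L_t = max(0, −min_{[0,t]} Y)` reaches `ξ > 0` exactly when `Y` itself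
has already dropped to `−ξ`, i.e. when `X_{0-} + ξ + B − αΛ` has hit `0`; this identifies the
elastic stopping time with the absorbing hitting time, particle by particle and path by path.
-/

theorem Monotone.upperSemicontinuous_of_continuousWithinAt_Ici {α β : Type*} [LinearOrder α]
    [TopologicalSpace α] [OrderTopology α] [LinearOrder β] [TopologicalSpace β] [OrderTopology β]
    {f : α → β} (hmono : Monotone f) (hrc : ∀ x, ContinuousWithinAt f (Ici x) x) :
    UpperSemicontinuous f := by
  intro x y hy
  rw [← nhdsLT_sup_nhdsGE x]
  exact eventually_sup.2
    ⟨eventually_nhdsWithin_of_forall fun s hs => (hmono (le_of_lt hs)).trans_lt hy,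
      (hrc x).eventually_lt_const hy⟩

theorem Continuous.lowerSemicontinuous_sub_mul {g Λ : ℝ → ℝ} (hg : Continuous g)
    (hΛ : UpperSemicontinuous Λ) {α : ℝ} (hα : 0 ≤ α) :
    LowerSemicontinuous fun s => g s - α * Λ s := by
  have hneg : LowerSemicontinuous ((fun x => -(α * x)) ∘ Λ) :=
    (continuous_const.mul continuous_id).neg.comp_upperSemicontinuous_antitone hΛ
      fun _ _ hxy => neg_le_neg (mul_le_mul_of_nonneg_left hxy hα)
  simpa only [sub_eq_add_neg, Function.comp_apply] using hg.lowerSemicontinuous.add hneg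

theorem Monotone.sInf_image_upperClosure {α β : Type*} [Preorder α] [CompleteLattice β]
    {f : α → β} (hf : Monotone f) (S : Set α) :
    sInf (f '' upperClosure S) = sInf (f '' S) := by
  refine le_antisymm (sInf_le_sInf (image_mono subset_upperClosure)) (le_sInf ?_)
  rintro _ ⟨u, hu, rfl⟩
  obtain ⟨s, hs, hsu⟩ := mem_upperClosure.1 hu
  exact (sInf_le (mem_image_of_mem f hs)).trans (hf hsu)

namespace LowerSemicontinuous

variable {Y : ℝ → ℝ} {ξ : ℝ}

theorem le_reflTerm_iff (hY : LowerSemicontinuous Y) (hξ : 0 < ξ) {t : ℝ} (ht : 0 ≤ t) :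
    ξ ≤ reflTerm Y t ↔ ∃ s ∈ Icc 0 t, Y s + ξ ≤ 0 := by
  obtain ⟨s₀, hs₀, hmin⟩ :=
    (hY.lowerSemicontinuousOn _).exists_isMinOn (nonempty_Icc.2 ht) isCompact_Icc
  have hrunMin : runMin Y t = Y s₀ :=
    IsLeast.csInf_eq ⟨mem_image_of_mem Y hs₀, by rintro _ ⟨u, hu, rfl⟩; exact hmin hu⟩
  rw [reflTerm, hrunMin, le_max_iff, or_iff_right hξ.not_ge]
  constructor
  · intro h
    exact ⟨s₀, hs₀, by linarith⟩
  · rintro ⟨s, hs, hYs⟩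
    linarith [show Y s₀ ≤ Y s from hmin hs]

theorem hitTime_reflTerm (hY : LowerSemicontinuous Y) (hξ : 0 < ξ) :
    hitTime (reflTerm Y) ξ = hitZeroTime fun s => Y s + ξ := by
  have hset : {t : ℝ | 0 ≤ t ∧ ξ ≤ reflTerm Y t} =
      upperClosure {s : ℝ | 0 ≤ s ∧ Y s + ξ ≤ 0} := by
    ext t
    simp only [mem_ofPred_eq, SetLike.mem_coe, mem_upperClosure]
    constructor
    · rintro ⟨ht, h⟩
      obtain ⟨s, hs, hYs⟩ := (hY.le_reflTerm_iff hξ ht).1 h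
      exact ⟨s, ⟨hs.1, hYs⟩, hs.2⟩
    · rintro ⟨s, ⟨hs, hYs⟩, hst⟩
      exact ⟨hs.trans hst, (hY.le_reflTerm_iff hξ (hs.trans hst)).2 ⟨s, ⟨hs, hst⟩, hYs⟩⟩
  rw [hitTime, hitZeroTime, hset, EReal.coe_strictMono.monotone.sInf_image_upperClosure]

end LowerSemicontinuous

theorem elasticTau_eq_absorbTau {Ω : Type*} {B : ℝ → Ω → ℝ} {X0 ξ : Ω → ℝ} {α : ℝ}
    {Λ : ℝ → ℝ} {ω : Ω} (hB : Continuous fun t => B t ω) (hΛ : UpperSemicontinuous Λ)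
    (hα : 0 ≤ α) (hξ : 0 < ξ ω) :
    elasticTau B X0 ξ α Λ ω = absorbTau B (fun ω' => X0 ω' + ξ ω') α Λ ω := by
  have hY : LowerSemicontinuous fun s => X0 ω + B s ω - α * Λ s :=
    (continuous_const.add hB).lowerSemicontinuous_sub_mul hΛ hα
  rw [elasticTau, absorbTau, hY.hitTime_reflTerm hξ]
  congr 1
  funext s
  ring

open scoped Classical

theorem statement_10_general {Ω : Type*} [MeasurableSpace Ω] (P : Measure Ω)
    (α : ℝ) (hα : 0 < α) (N : ℕ)
    (B : Fin N → ℝ → Ω → ℝ) (X0 ξ : Fin N → Ω → ℝ)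
    (hB : ∀ i, IsStandardBM P (B i))
    (hξpos : ∀ i ω, 0 < ξ i ω)
    (Λ : Ω → ℝ → ℝ) (hΛ : ∀ ω, IsLossFn (Λ ω)) :
    (∀ ω (i : Fin N),
        elasticTau (B i) (X0 i) (ξ i) α (Λ ω) ω
          = absorbTau (B i) (fun ω' => X0 i ω' + ξ i ω') α (Λ ω) ω) ∧
      ((∀ ω, ∀ t : ℝ, 0 ≤ t →
          Λ ω t = (∑ i : Fin N,
            if elasticTau (B i) (X0 i) (ξ i) α (Λ ω) ω ≤ (t : EReal) then (1 : ℝ) else 0) / N)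
        ↔ (∀ ω, ∀ t : ℝ, 0 ≤ t →
          Λ ω t = (∑ i : Fin N,
            if absorbTau (B i) (fun ω' => X0 i ω' + ξ i ω') α (Λ ω) ω ≤ (t : EReal)
              then (1 : ℝ) else 0) / N)) := by
  have htau : ∀ ω (i : Fin N), elasticTau (B i) (X0 i) (ξ i) α (Λ ω) ω
      = absorbTau (B i) (fun ω' => X0 i ω' + ξ i ω') α (Λ ω) ω := fun ω i =>
    elasticTau_eq_absorbTau ((hB i).2.1 ω)
      ((hΛ ω).1.upperSemicontinuous_of_continuousWithinAt_Ici (hΛ ω).2.1) hα.le (hξpos i ω)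
  refine ⟨htau, ?_⟩
  simp only [htau]

/-- in the `N`-particle elastic feedback system, the elastic stopping times
coincide pathwise with the absorbing hitting times for the shifted initial conditions
`X^i_{0-} + ξ^i`; consequently `Λ^N` solves the elastic particle system iff it solves the
absorbing particle system with those initial conditions. -/
theorem statement_10 {Ω : Type*} [MeasurableSpace Ω] (P : Measure Ω) [IsProbabilityMeasure P]
    (α κ : ℝ) (hα : 0 < α) (hκ : 0 < κ) (N : ℕ) (hN : 0 < N)
    (B : Fin N → ℝ → Ω → ℝ) (X0 ξ : Fin N → Ω → ℝ)
    (hB : ∀ i, IsStandardBM P (B i))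
    (hBindep : iIndepFun
      (fun i ω => fun t => B i t ω) P)
    (hX0meas : ∀ i, Measurable (X0 i)) (hX0nonneg : ∀ i ω, 0 ≤ X0 i ω)
    (hξexp : ∀ i, IsExponential P κ (ξ i)) (hξpos : ∀ i ω, 0 < ξ i ω)
    (hξiid : iIndepFun
      (fun i ω => ξ i ω) P)
    (hindepXξ : IndepFun (fun ω => fun i => X0 i ω) (fun ω => fun i => ξ i ω) P)
    (hindepB : IndepFun (fun ω => (fun i => X0 i ω, fun i => ξ i ω))
      (fun ω => fun i => fun t => B i t ω) P)
    (Λ : Ω → ℝ → ℝ) (hΛ : ∀ ω, IsLossFn (Λ ω)) :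
    (∀ ω (i : Fin N),
        elasticTau (B i) (X0 i) (ξ i) α (Λ ω) ω
          = absorbTau (B i) (fun ω' => X0 i ω' + ξ i ω') α (Λ ω) ω) ∧
      ((∀ ω, ∀ t : ℝ, 0 ≤ t →
          Λ ω t = (∑ i : Fin N,
            if elasticTau (B i) (X0 i) (ξ i) α (Λ ω) ω ≤ (t : EReal) then (1 : ℝ) else 0) / N)
        ↔ (∀ ω, ∀ t : ℝ, 0 ≤ t →
          Λ ω t = (∑ i : Fin N,
            if absorbTau (B i) (fun ω' => X0 i ω' + ξ i ω') α (Λ ω) ω ≤ (t : EReal)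
              then (1 : ℝ) else 0) / N)) :=
  statement_10_general P α hα N B X0 ξ hB hξpos Λ hΛ

end
end

section
/- Every solution Λ of the elastic feedback problem satisfies lim_{t→∞} Λ_t = 1; equivalently, the elastic stopping time τ is almost surely finite. -/
open MeasureTheory ProbabilityTheory Filter Topology Set

noncomputable section

/-!
Since `αΛ ≥ 0`, the path `Y = X₀₋ + B - αΛ` stays below `X₀₋ + B`, so `τ ≤ s` as soon as
`B_s ≤ -(X₀₋ + ξ)`: then `L_s ≥ -Y_s ≥ ξ`. Brownian motion reaches every level `-c < 0`: at
suitably spaced times `t₀ < t₁ < ⋯` each independent increment takes `B` from `B_{tᵢ}` (which is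
not too large, by Chebyshev) below `-c` with probability at least `1/2 - ε`, so `B` stays above `-c`
at all of `t₁, …, tₙ` with probability at most `(1/2 + ε)ⁿ + nε`. Hence `P(τ > T) → 0`, which gives
both `Λ_T = P(τ ≤ T) → 1` and `P(τ < ∞) = 1`.
-/

open scoped NNReal

namespace ProbabilityTheory

lemma gaussianPDFReal_le_inv_sqrt (μ : ℝ) (v : ℝ≥0) (x : ℝ) :
    gaussianPDFReal μ v x ≤ (√(2 * Real.pi * v))⁻¹ := by
  rw [gaussianPDFReal_def]
  refine mul_le_of_le_one_right (by positivity) (Real.exp_le_one_iff.2 ?_)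
  rw [neg_div]
  exact neg_nonpos.2 (by positivity)

lemma gaussianReal_Ioo_le {v : ℝ≥0} (hv : v ≠ 0) (μ a b : ℝ) :
    gaussianReal μ v (Ioo a b) ≤ ENNReal.ofReal ((b - a) / √v) := by
  rw [gaussianReal_apply μ hv]
  calc ∫⁻ x in Ioo a b, gaussianPDF μ v x
      ≤ ∫⁻ _ in Ioo a b, ENNReal.ofReal (√(2 * Real.pi * v))⁻¹ :=
        lintegral_mono fun x => ENNReal.ofReal_le_ofReal (gaussianPDFReal_le_inv_sqrt μ v x)
    _ = ENNReal.ofReal ((b - a) / √(2 * Real.pi * v)) := by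
        rw [setLIntegral_const, Real.volume_Ioo, ← ENNReal.ofReal_mul (by positivity),
          mul_comm, div_eq_mul_inv]
    _ ≤ ENNReal.ofReal ((b - a) / √v) := by
        rcases le_total b a with hba | hab
        · rw [ENNReal.ofReal_of_nonpos (div_nonpos_of_nonpos_of_nonneg (sub_nonpos.2 hba)
            (Real.sqrt_nonneg _))]
          exact zero_le
        refine ENNReal.ofReal_le_ofReal (div_le_div_of_nonneg_left (sub_nonneg.2 hab)
          (Real.sqrt_pos.2 (by positivity)) (Real.sqrt_le_sqrt ?_))
        nlinarith [Real.pi_gt_three, v.coe_nonneg]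

lemma gaussianReal_Ici_zero {v : ℝ≥0} (hv : v ≠ 0) : gaussianReal 0 v (Ici 0) = 1 / 2 := by
  have hsymm : gaussianReal 0 v (Iic 0) = gaussianReal 0 v (Ici 0) := by
    conv_rhs => rw [← neg_zero, ← gaussianReal_map_neg,
      Measure.map_apply measurable_neg measurableSet_Ici]
    simp
  have hunion := measure_union_add_inter (μ := gaussianReal 0 v) (Ici (0 : ℝ))
    (measurableSet_Iic (a := 0))
  rw [Ici_union_Iic, Ici_inter_Iic, Icc_self,
    (gaussianReal_absolutelyContinuous 0 hv) (measure_singleton 0), measure_univ, add_zero,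
    hsymm] at hunion
  rw [ENNReal.eq_div_iff two_ne_zero ENNReal.ofNat_ne_top, two_mul, hunion]

lemma gaussianReal_Ioi_neg_le {v : ℝ≥0} (hv : v ≠ 0) (m : ℝ) :
    gaussianReal 0 v (Ioi (-m)) ≤ 1 / 2 + ENNReal.ofReal (m / √v) := by
  have hsplit : Ioi (-m) ⊆ Ici 0 ∪ Ioo (-m) 0 := fun x hx => by
    rcases le_or_gt 0 x with h | h
    exacts [Or.inl h, Or.inr ⟨hx, h⟩]
  calc gaussianReal 0 v (Ioi (-m)) ≤ gaussianReal 0 v (Ici 0) + gaussianReal 0 v (Ioo (-m) 0) :=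
        (measure_mono hsplit).trans (measure_union_le _ _)
    _ ≤ 1 / 2 + ENNReal.ofReal (m / √v) := by
        rw [gaussianReal_Ici_zero hv]
        simpa using add_le_add_left (gaussianReal_Ioo_le hv 0 (-m) 0) (1 / 2)

lemma gaussianReal_Ioi_le (v : ℝ≥0) {r : ℝ} (hr : 0 < r) :
    gaussianReal 0 v (Ioi r) ≤ ENNReal.ofReal (v / r ^ 2) := by
  have hcheb := meas_ge_le_variance_div_sq (memLp_id_gaussianReal (μ := 0) (v := v) 2) hr
  rw [variance_id_gaussianReal] at hcheb
  refine (measure_mono fun x (hx : r < x) => ?_).trans hcheb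
  show r ≤ |x - ∫ y, y ∂gaussianReal 0 v|
  rw [integral_id_gaussianReal, sub_zero]
  exact hx.le.trans (le_abs_self x)

end ProbabilityTheory

lemma one_sub_toReal_measure_compl_le {Ω : Type*} [MeasurableSpace Ω] (P : Measure Ω)
    [IsProbabilityMeasure P] (s : Set Ω) : 1 - (P sᶜ).toReal ≤ (P s).toReal := by
  have h := ENNReal.toReal_mono (by finiteness) (measure_univ_le_add_compl (μ := P) s)
  rw [measure_univ, ENNReal.toReal_add (by finiteness) (by finiteness)] at h
  simp only [ENNReal.toReal_one] at h
  linarith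

lemma tendsto_measure_lt_atTop {Ω : Type*} [MeasurableSpace Ω] (P : Measure Ω) [IsFiniteMeasure P]
    {Z : Ω → ℝ} (hZ : Measurable Z) : Tendsto (fun c => P {ω | c < Z ω}) atTop (𝓝 0) := by
  have h := tendsto_measure_iInter_atTop (μ := P) (s := fun c : ℝ => {ω | c < Z ω})
    (fun _ => (measurableSet_lt measurable_const hZ).nullMeasurableSet)
    (fun _ _ hab _ h => hab.trans_lt h) ⟨0, measure_ne_top _ _⟩
  rwa [iInter_eq_empty_iff.2 fun ω => ⟨Z ω, lt_irrefl (Z ω)⟩, measure_empty] at h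

/-- With `r = √((t + 1) / ε)`, Chebyshev gives `P(B_t > r) ≤ ε`, and the next increment has
standard deviation `(c + r) / ε`, so it drops below `-(c + r)` with probability `≥ 1/2 - ε`. -/
def probeTimes (c ε : ℝ) : ℕ → ℝ
  | 0 => 0
  | n + 1 => probeTimes c ε n + ((c + √((probeTimes c ε n + 1) / ε)) / ε) ^ 2

lemma probeTimes_monotone (c ε : ℝ) : Monotone (probeTimes c ε) :=
  monotone_nat_of_le_succ fun _ => le_add_of_nonneg_right (sq_nonneg _)

lemma probeTimes_nonneg (c ε : ℝ) (n : ℕ) : 0 ≤ probeTimes c ε n :=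
  probeTimes_monotone c ε (Nat.zero_le n)

lemma exists_pos_pow_add_mul_le {δ : ℝ} (hδ : 0 < δ) :
    ∃ (n : ℕ) (ε : ℝ), 0 < ε ∧ (1 / 2 + ε) ^ n + n * ε ≤ δ := by
  obtain ⟨n, hn⟩ := exists_pow_lt_of_lt_one (half_pos hδ) (by norm_num : (3 / 4 : ℝ) < 1)
  set ε := min (1 / 4) (δ / (2 * (n + 1)))
  have hε : 0 < ε := lt_min (by norm_num) (by positivity)
  refine ⟨n, ε, hε, ?_⟩
  have hpow : (1 / 2 + ε) ^ n ≤ (3 / 4) ^ n :=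
    pow_le_pow_left₀ (by positivity) (by linarith [min_le_left (1 / 4 : ℝ) (δ / (2 * (n + 1)))]) n
  have hmul : (n + 1) * ε ≤ δ / 2 := by
    calc (n + 1) * ε ≤ (n + 1) * (δ / (2 * (n + 1))) := by gcongr; exact min_le_right _ _
      _ = δ / 2 := by field_simp
  nlinarith

namespace IsStandardBM

variable {Ω : Type*} [MeasurableSpace Ω] {P : Measure Ω} {B : ℝ → Ω → ℝ}

lemma map_eval (hB : IsStandardBM P B) {t : ℝ} (ht : 0 ≤ t) :
    P.map (B t) = gaussianReal 0 t.toNNReal := by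
  simpa [hB.1] using hB.2.2.2.1 0 t le_rfl ht

lemma measure_lt_le (hB : IsStandardBM P B) {t r : ℝ} (ht : 0 ≤ t) (hr : 0 < r) :
    P {ω | r < B t ω} ≤ ENNReal.ofReal (t / r ^ 2) := by
  calc P {ω | r < B t ω} = P.map (B t) (Ioi r) :=
        (Measure.map_apply (hB.2.2.1 t) measurableSet_Ioi).symm
    _ ≤ ENNReal.ofReal (t / r ^ 2) := by
        rw [hB.map_eval ht]
        simpa [Real.coe_toNNReal t ht] using gaussianReal_Ioi_le t.toNNReal hr

lemma measure_forall_gt_le (hB : IsStandardBM P B) {t : ℕ → ℝ} (ht : Monotone t)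
    (ht0 : 0 ≤ t 0) (c : ℝ) (r : ℕ → ℝ) (n : ℕ) :
    P {ω | ∀ i : Fin n, -c < B (t (i + 1)) ω} ≤
      ∏ i : Fin n, gaussianReal 0 (t (i + 1) - t i).toNNReal (Ioi (-(c + r i))) +
        ∑ i : Fin n, P {ω | r i < B (t i) ω} := by
  set D : ℕ → Ω → ℝ := fun i ω => B (t (i + 1)) ω - B (t i) ω
  have hsub : {ω | ∀ i : Fin n, -c < B (t (i + 1)) ω} ⊆
      (⋂ i : Fin n, D i ⁻¹' Ioi (-(c + r i))) ∪ ⋃ i : Fin n, {ω | r i < B (t i) ω} := by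
    intro ω hω
    by_cases hhigh : ∃ i : Fin n, r i < B (t i) ω
    · exact Or.inr (mem_iUnion.2 hhigh)
    · push Not at hhigh
      refine Or.inl (mem_iInter.2 fun i => ?_)
      have := hω i
      have := hhigh i
      simp only [D, mem_preimage, mem_Ioi]
      linarith
  have hincrements : P (⋂ i : Fin n, D i ⁻¹' Ioi (-(c + r i))) =
      ∏ i : Fin n, gaussianReal 0 (t (i + 1) - t i).toNNReal (Ioi (-(c + r i))) := by
    rw [(hB.2.2.2.2 n t ht ht0).meas_iInter fun i => ⟨_, measurableSet_Ioi, rfl⟩]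
    refine Finset.prod_congr rfl fun i _ => ?_
    rw [← hB.2.2.2.1 (t i) (t (i + 1)) (ht0.trans (ht (Nat.zero_le _))) (ht (Nat.le_succ _))]
    exact (Measure.map_apply ((hB.2.2.1 _).sub (hB.2.2.1 _)) measurableSet_Ioi).symm
  calc P {ω | ∀ i : Fin n, -c < B (t (i + 1)) ω}
      ≤ P (⋂ i : Fin n, D i ⁻¹' Ioi (-(c + r i))) + P (⋃ i : Fin n, {ω | r i < B (t i) ω}) :=
        (measure_mono hsub).trans (measure_union_le _ _)
    _ ≤ _ := by
        rw [hincrements]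
        gcongr
        exact measure_iUnion_fintype_le _ _

lemma exists_measure_forall_Icc_gt_le (hB : IsStandardBM P B) {c ε : ℝ} (hc : 0 < c)
    (hε : 0 < ε) (n : ℕ) :
    ∃ T, P {ω | ∀ s ∈ Icc 0 T, -c < B s ω} ≤ ENNReal.ofReal ((1 / 2 + ε) ^ n + n * ε) := by
  set t := probeTimes c ε
  set r : ℕ → ℝ := fun i => √((t i + 1) / ε)
  have hr : ∀ i, 0 < r i := fun i => Real.sqrt_pos.2 (by positivity [probeTimes_nonneg c ε i])
  have hfactor : ∀ i : ℕ, gaussianReal 0 (t (i + 1) - t i).toNNReal (Ioi (-(c + r i))) ≤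
      ENNReal.ofReal (1 / 2 + ε) := by
    intro i
    have hv : t (i + 1) - t i = ((c + r i) / ε) ^ 2 := by
      simp only [t, probeTimes]
      ring
    have hσ : 0 < c + r i := by linarith [hr i]
    rw [hv]
    refine (gaussianReal_Ioi_neg_le (Real.toNNReal_pos.2 (by positivity)).ne' _).trans_eq ?_
    rw [Real.coe_toNNReal _ (sq_nonneg _), Real.sqrt_sq (by positivity), div_div_cancel₀ hσ.ne',
      ENNReal.ofReal_add (by norm_num) hε.le, ENNReal.ofReal_div_of_pos two_pos,
      ENNReal.ofReal_one, ENNReal.ofReal_ofNat]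
  have htail : ∀ i : ℕ, P {ω | r i < B (t i) ω} ≤ ENNReal.ofReal ε := by
    intro i
    have hti := probeTimes_nonneg c ε i
    refine (hB.measure_lt_le hti (hr i)).trans (ENNReal.ofReal_le_ofReal ?_)
    rw [Real.sq_sqrt (by positivity), div_div_eq_mul_div, div_le_iff₀ (by positivity)]
    nlinarith
  have hsub : {ω | ∀ s ∈ Icc 0 (t n), -c < B s ω} ⊆ {ω | ∀ i : Fin n, -c < B (t (i + 1)) ω} :=
    fun ω hω i => hω _ ⟨probeTimes_nonneg c ε _, probeTimes_monotone c ε i.2⟩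
  refine ⟨t n, (measure_mono hsub).trans
    ((hB.measure_forall_gt_le (probeTimes_monotone c ε) le_rfl c r n).trans ?_)⟩
  calc ∏ i : Fin n, gaussianReal 0 (t (i + 1) - t i).toNNReal (Ioi (-(c + r i))) +
        ∑ i : Fin n, P {ω | r i < B (t i) ω}
      ≤ ∏ _i : Fin n, ENNReal.ofReal (1 / 2 + ε) + ∑ _i : Fin n, ENNReal.ofReal ε := by
        gcongr with i _ i _
        exacts [hfactor i, htail i]
    _ = ENNReal.ofReal ((1 / 2 + ε) ^ n + n * ε) := by
        rw [Finset.prod_const, Finset.sum_const, Finset.card_univ, Fintype.card_fin, nsmul_eq_mul,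
          ← ENNReal.ofReal_pow (by positivity), ← ENNReal.ofReal_natCast,
          ← ENNReal.ofReal_mul (by positivity),
          ← ENNReal.ofReal_add (by positivity) (by positivity)]

lemma tendsto_measure_forall_Icc_gt (hB : IsStandardBM P B) {c : ℝ} (hc : 0 < c) :
    Tendsto (fun T => P {ω | ∀ s ∈ Icc 0 T, -c < B s ω}) atTop (𝓝 0) := by
  refine ENNReal.tendsto_atTop_zero.2 fun δ hδ => ?_
  obtain ⟨η, -, hη, hηδ⟩ := ENNReal.lt_iff_exists_real_btwn.1 hδ
  obtain ⟨n, ε, hε, hbound⟩ := exists_pos_pow_add_mul_le (ENNReal.ofReal_pos.1 hη)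
  obtain ⟨T, hT⟩ := hB.exists_measure_forall_Icc_gt_le hc hε n
  refine ⟨T, fun T' hT' => ?_⟩
  calc P {ω | ∀ s ∈ Icc 0 T', -c < B s ω} ≤ P {ω | ∀ s ∈ Icc 0 T, -c < B s ω} :=
        measure_mono fun ω hω s hs => hω s ⟨hs.1, hs.2.trans hT'⟩
    _ ≤ δ := hT.trans ((ENNReal.ofReal_le_ofReal hbound).trans hηδ.le)

end IsStandardBM

lemma neg_le_reflTerm {Y : ℝ → ℝ} {s : ℝ} (hY : BddBelow (Y '' Icc 0 s)) (hs : 0 ≤ s) :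
    -Y s ≤ reflTerm Y s :=
  (neg_le_neg (csInf_le hY ⟨s, ⟨hs, le_rfl⟩, rfl⟩)).trans (le_max_right _ _)

lemma hitTime_le {L : ℝ → ℝ} {x s : ℝ} (hs : 0 ≤ s) (h : x ≤ L s) : hitTime L x ≤ s :=
  sInf_le ⟨s, ⟨hs, h⟩, rfl⟩

lemma IsLossFn.nonneg {Λ : ℝ → ℝ} (hΛ : IsLossFn Λ) {s : ℝ} (hs : 0 ≤ s) : 0 ≤ Λ s :=
  (hΛ.2.2.1 (-1) (by norm_num)).symm.le.trans (hΛ.1 (by linarith))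

section ElasticTau

variable {Ω : Type*} {B : ℝ → Ω → ℝ} {X0 ξ : Ω → ℝ} {α : ℝ} {Λ : ℝ → ℝ}

lemma elasticTau_le_of_le_neg (hΛ : IsLossFn Λ) (hα : 0 ≤ α) {ω : Ω}
    (hB : Continuous fun u => B u ω) {s : ℝ} (hs : 0 ≤ s) (hdrop : B s ω ≤ -(X0 ω + ξ ω)) :
    elasticTau B X0 ξ α Λ ω ≤ s := by
  obtain ⟨m, hm⟩ := ((isCompact_Icc (a := 0) (b := s)).image hB).bddBelow
  have hbdd : BddBelow ((fun u => X0 ω + B u ω - α * Λ u) '' Icc 0 s) := by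
    refine ⟨X0 ω + m - α, ?_⟩
    rintro _ ⟨u, hu, rfl⟩
    have := hm ⟨u, hu, rfl⟩
    have := mul_le_mul_of_nonneg_left (hΛ.2.2.2 u) hα
    linarith
  refine hitTime_le hs (le_trans ?_ (neg_le_reflTerm hbdd hs))
  have := mul_nonneg hα (hΛ.nonneg hs)
  linarith

lemma measure_compl_elasticTau_le_le [MeasurableSpace Ω] (P : Measure Ω)
    (hB : ∀ ω, Continuous fun u => B u ω) (hΛ : IsLossFn Λ) (hα : 0 ≤ α) (c T : ℝ) :
    P {ω | elasticTau B X0 ξ α Λ ω ≤ T}ᶜ ≤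
      P {ω | c < X0 ω + ξ ω} + P {ω | ∀ s ∈ Icc 0 T, -c < B s ω} := by
  refine (measure_mono fun ω (hω : ¬elasticTau B X0 ξ α Λ ω ≤ T) => ?_).trans
    (measure_union_le _ _)
  rcases lt_or_ge c (X0 ω + ξ ω) with hX | hX
  · exact Or.inl hX
  refine Or.inr fun s hs => lt_of_not_ge fun hBs => hω ?_
  exact (elasticTau_le_of_le_neg hΛ hα (hB ω) hs.1 (by linarith)).trans
    (EReal.coe_le_coe_iff.2 hs.2)

lemma tendsto_measure_compl_elasticTau_le [MeasurableSpace Ω] {P : Measure Ω} [IsFiniteMeasure P]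
    (hB : IsStandardBM P B) (hX0 : Measurable X0) (hξ : Measurable ξ) (hΛ : IsLossFn Λ)
    (hα : 0 ≤ α) :
    Tendsto (fun T : ℝ => P {ω | elasticTau B X0 ξ α Λ ω ≤ T}ᶜ) atTop (𝓝 0) := by
  refine ENNReal.tendsto_atTop_zero.2 fun δ hδ => ?_
  have hδ2 : 0 < δ / 2 := ENNReal.half_pos hδ.ne'
  obtain ⟨c, hXξ, hc⟩ := (((tendsto_order.1 (tendsto_measure_lt_atTop P (hX0.add hξ))).2 _
    hδ2).and (eventually_gt_atTop 0)).exists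
  obtain ⟨T₀, hT₀⟩ := ENNReal.tendsto_atTop_zero.1 (hB.tendsto_measure_forall_Icc_gt hc) _ hδ2
  refine ⟨T₀, fun T hT => ?_⟩
  calc P {ω | elasticTau B X0 ξ α Λ ω ≤ T}ᶜ
      ≤ P {ω | c < X0 ω + ξ ω} + P {ω | ∀ s ∈ Icc 0 T, -c < B s ω} :=
        measure_compl_elasticTau_le_le P hB.2.1 hΛ hα c T
    _ ≤ δ / 2 + δ / 2 := add_le_add hXξ.le (hT₀ T hT)
    _ = δ := ENNReal.add_halves δ

end ElasticTau

theorem statement_12_general {Ω : Type*} [MeasurableSpace Ω] (P : Measure Ω) [IsProbabilityMeasure P]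
    (α κ : ℝ) (hα : 0 < α)
    (B : ℝ → Ω → ℝ) (X0 ξ : Ω → ℝ)
    (hB : IsStandardBM P B)
    (hX0meas : Measurable X0)
    (hξ : IsExponential P κ ξ)
    (Λ : ℝ → ℝ) (hsol : IsElasticSol P B X0 ξ α Λ) :
    Filter.Tendsto Λ Filter.atTop (nhds 1) ∧
      P {ω | elasticTau B X0 ξ α Λ ω < (⊤ : EReal)} = 1 := by
  obtain ⟨hΛ, hΛ_eq⟩ := hsol
  have hτ := tendsto_measure_compl_elasticTau_le hB hX0meas hξ.1 hΛ hα.le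
  have hlower : Tendsto (fun T : ℝ => 1 - (P {ω | elasticTau B X0 ξ α Λ ω ≤ T}ᶜ).toReal) atTop
      (𝓝 1) := by
    simpa using tendsto_const_nhds.sub ((ENNReal.tendsto_toReal ENNReal.zero_ne_top).comp hτ)
  refine ⟨tendsto_of_tendsto_of_tendsto_of_le_of_le' hlower tendsto_const_nhds ?_
    (Eventually.of_forall hΛ.2.2.2), le_antisymm prob_le_one ?_⟩
  · filter_upwards [eventually_ge_atTop 0] with T hT
    rw [hΛ_eq T hT]
    exact one_sub_toReal_measure_compl_le P _
  · refine ge_of_tendsto' (by simpa using tendsto_const_nhds.add hτ) fun T => ?_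
    calc 1 = P univ := measure_univ.symm
      _ ≤ P {ω | elasticTau B X0 ξ α Λ ω ≤ T} + P {ω | elasticTau B X0 ξ α Λ ω ≤ T}ᶜ :=
        measure_univ_le_add_compl _
      _ ≤ _ := add_le_add (measure_mono fun _ h => lt_of_le_of_lt h (EReal.coe_lt_top T)) le_rfl

/-- every solution `Λ` of the elastic feedback problem satisfies
`Λ_t → 1` as `t → ∞`; equivalently the elastic stopping time `τ` is a.s. finite. -/
theorem statement_12 {Ω : Type*} [MeasurableSpace Ω] (P : Measure Ω) [IsProbabilityMeasure P]
    (α κ : ℝ) (hα : 0 < α) (hκ : 0 < κ)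
    (B : ℝ → Ω → ℝ) (X0 ξ : Ω → ℝ)
    (hB : IsStandardBM P B)
    (hX0meas : Measurable X0) (hX0nonneg : ∀ ω, 0 ≤ X0 ω)
    (hξ : IsExponential P κ ξ)
    (hindepX0ξ : IndepFun X0 ξ P)
    (hindepB : IndepFun (fun ω => (X0 ω, ξ ω)) (fun ω => fun t => B t ω) P)
    (Λ : ℝ → ℝ) (hsol : IsElasticSol P B X0 ξ α Λ) :
    Filter.Tendsto Λ Filter.atTop (nhds 1) ∧
      P {ω | elasticTau B X0 ξ α Λ ω < (⊤ : EReal)} = 1 :=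
  statement_12_general P α κ hα B X0 ξ hB hX0meas hξ Λ hsol

end
end
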